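/- arXiv:1507.08592 — 4 statements merged into one kernel-verified Lean document; each statement's English description precedes it below -/
import Mathlib

section
/- Let M and Q' be n×n real matrices. Assume that the function t ↦ exp(tMᵀ)·Q'·exp(tM) is Bochner integrable on [0,∞) and that exp(tM) → 0 (the zero matrix) as t → ∞. Then the matrix X = ∫₀^∞ exp(tMᵀ)·Q'·exp(tM) dt satisfies the Lyapunov equation MᵀX + XM + Q' = 0. -/
/-!
`f t = exp (t Mᵀ) Q' exp (t M)` satisfies `f' = Mᵀ f + f M`, `f 0 = Q'` and `f t → 0`, so
integrating `f'` over `(0, ∞)` gives `Mᵀ X + X M = -Q'`. This works in any real Banach algebra;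
for matrices one picks a Banach-algebra norm, and entrywise integrability transfers to it
because a matrix is a finite sum of its entries times the standard basis matrices.
-/

open Filter Set Topology MeasureTheory Matrix NormedSpace

theorem hasDerivAt_exp_smul_mul_mul_exp_smul {𝕂 𝔸 : Type*} [RCLike 𝕂] [NormedRing 𝔸]
    [NormedAlgebra 𝕂 𝔸] [CompleteSpace 𝔸] (A Q B : 𝔸) (t : 𝕂) :
    HasDerivAt (fun u : 𝕂 => exp (u • A) * Q * exp (u • B))
      (A * (exp (t • A) * Q * exp (t • B)) + exp (t • A) * Q * exp (t • B) * B) t :=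
  (((hasDerivAt_exp_smul_const' A t).mul_const Q).mul (hasDerivAt_exp_smul_const B t)).congr_deriv
    (by simp only [mul_assoc])

theorem mul_integral_exp_add_integral_exp_mul_add_eq_zero {𝔸 : Type*} [NormedRing 𝔸]
    [NormedAlgebra ℝ 𝔸] [CompleteSpace 𝔸] {A Q B : 𝔸}
    (hint : IntegrableOn (fun t : ℝ => exp (t • A) * Q * exp (t • B)) (Ioi 0))
    (hlim : Tendsto (fun t : ℝ => exp (t • A) * Q * exp (t • B)) atTop (𝓝 0)) :
    A * (∫ t in Ioi (0 : ℝ), exp (t • A) * Q * exp (t • B)) +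
      (∫ t in Ioi (0 : ℝ), exp (t • A) * Q * exp (t • B)) * B + Q = 0 := by
  have hFTC := integral_Ioi_of_hasDerivAt_of_tendsto'
    (fun t _ => hasDerivAt_exp_smul_mul_mul_exp_smul A Q B t)
    ((hint.const_mul A).add (hint.mul_const B)) hlim
  have hmul_left : ∫ t in Ioi (0 : ℝ), A * (exp (t • A) * Q * exp (t • B)) =
      A * ∫ t in Ioi (0 : ℝ), exp (t • A) * Q * exp (t • B) :=
    (ContinuousLinearMap.mul ℝ 𝔸 A).integral_comp_comm hint
  have hmul_right : ∫ t in Ioi (0 : ℝ), exp (t • A) * Q * exp (t • B) * B =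
      (∫ t in Ioi (0 : ℝ), exp (t • A) * Q * exp (t • B)) * B :=
    ((ContinuousLinearMap.mul ℝ 𝔸).flip B).integral_comp_comm hint
  rw [integral_add (hint.const_mul A) (hint.mul_const B), hmul_left, hmul_right] at hFTC
  simpa [eq_neg_iff_add_eq_zero] using hFTC

section Matrix

open scoped Matrix.Norms.L2Operator

variable {α m n : Type*} [MeasurableSpace α] {μ : Measure α} [Fintype m] [Fintype n]
  [DecidableEq m] [DecidableEq n]

theorem Matrix.integrable_of_forall_integrable_apply {𝕜 : Type*} [RCLike 𝕜]
    {f : α → Matrix m n 𝕜} (hf : ∀ i j, Integrable (fun t => f t i j) μ) :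
    Integrable f μ := by
  have hsum : f = fun t => ∑ i, ∑ j, f t i j • single i j (1 : 𝕜) := by
    ext t : 1
    conv_lhs => rw [matrix_eq_sum_single (f t)]
    simp
  rw [hsum]
  exact integrable_finsetSum _ fun i _ => integrable_finsetSum _ fun j _ =>
    (hf i j).smul_const _

theorem Matrix.integral_apply {f : α → Matrix m n ℝ}
    (hf : ∀ i j, Integrable (fun t => f t i j) μ) (i : m) (j : n) :
    (∫ t, f t ∂μ) i j = ∫ t, f t i j ∂μ :=
  ((entryLinearMap ℝ ℝ i j).toContinuousLinearMap.integral_comp_comm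
    (integrable_of_forall_integrable_apply hf)).symm

end Matrix

/-- If `t ↦ exp(tMᵀ) Q' exp(tM)` is integrable on `[0,∞)` (entrywise,
equivalently Bochner) and `exp(tM) → 0` as `t → ∞`, then
`X = ∫₀^∞ exp(tMᵀ) Q' exp(tM) dt` satisfies the Lyapunov equation `MᵀX + XM + Q' = 0`. -/
theorem stmt2 (n : ℕ) (M Q' : Matrix (Fin n) (Fin n) ℝ)
    (hInt : ∀ i j, IntegrableOn
      (fun t : ℝ => (NormedSpace.exp (t • Mᵀ) * Q' * NormedSpace.exp (t • M)) i j)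
      (Set.Ioi 0))
    (hlim : Filter.Tendsto (fun t : ℝ => NormedSpace.exp (t • M)) Filter.atTop
      (nhds (0 : Matrix (Fin n) (Fin n) ℝ)))
    (X : Matrix (Fin n) (Fin n) ℝ)
    (hX : ∀ i j, X i j = ∫ t in Set.Ioi (0 : ℝ),
      (NormedSpace.exp (t • Mᵀ) * Q' * NormedSpace.exp (t • M)) i j) :
    Mᵀ * X + X * M + Q' = 0 := by
  open scoped Matrix.Norms.L2Operator in
  have hX' : X = ∫ t in Ioi (0 : ℝ), exp (t • Mᵀ) * Q' * exp (t • M) := by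
    ext i j
    rw [hX, Matrix.integral_apply hInt]
  have hlimT : Tendsto (fun t : ℝ => exp (t • Mᵀ)) atTop (𝓝 0) := by
    simpa [← transpose_smul, exp_transpose, Function.comp_def] using
      (continuous_id.matrix_transpose.tendsto 0).comp hlim
  open scoped Matrix.Norms.L2Operator in
  exact hX' ▸ mul_integral_exp_add_integral_exp_mul_add_eq_zero
    (Matrix.integrable_of_forall_integrable_apply hInt)
    (by simpa using (hlimT.mul_const Q').mul hlim)
end

section
/- (Core of Proposition 2.) Let n ≥ 1, δ > 0, ε ≥ 0, let Y be a symmetric n×n real matrix and P, P̄ arbitrary n×n real matrices. Define M = (1+δ)·PᵀP and N = (1+δ)·(PᵀP̄ + P̄ᵀ(P − P̄)). If Y − M is positive semidefinite and ‖Y − N‖ ≤ ε/n (ℓ2 operator norm), then trace(Y − M) ≤ ε. -/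
open Matrix
open scoped Matrix.Norms.L2Operator

/-! The gap `M - N = (1 + δ) (P - P̄)ᵀ (P - P̄)` is positive semidefinite, so
`trace (Y - M) ≤ trace (Y - N)`; and the trace of an `n × n` matrix is at most `n` times
its ℓ2 operator norm, because every diagonal entry `A i i = ⟪eᵢ, A eᵢ⟫` is bounded by that
norm. -/

namespace Matrix

theorem norm_apply_le_l2_opNorm {𝕜 m n : Type*} [RCLike 𝕜] [Fintype m] [Fintype n]
    [DecidableEq n] (A : Matrix m n 𝕜) (i : m) (j : n) : ‖A i j‖ ≤ ‖A‖ := by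
  have h := A.l2_opNorm_mulVec (EuclideanSpace.single j 1)
  rw [PiLp.norm_single, norm_one, mul_one] at h
  refine le_trans (le_of_eq ?_) ((PiLp.norm_apply_le _ i).trans h)
  simp [mulVec_single]

theorem trace_le_card_mul_l2_opNorm {n : Type*} [Fintype n] [DecidableEq n]
    (A : Matrix n n ℝ) : A.trace ≤ Fintype.card n * ‖A‖ :=
  calc A.trace = ∑ i, A i i := rfl
    _ ≤ ∑ _i : n, ‖A‖ :=
      Finset.sum_le_sum fun i _ => (le_abs_self _).trans (A.norm_apply_le_l2_opNorm i i)
    _ = Fintype.card n * ‖A‖ := by simp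

theorem transpose_mul_self_sub_linearization {m n R : Type*} [Fintype m] [CommRing R]
    (P Q : Matrix m n R) : Pᵀ * P - (Pᵀ * Q + Qᵀ * (P - Q)) = (P - Q)ᵀ * (P - Q) := by
  rw [transpose_sub, Matrix.sub_mul, Matrix.mul_sub, Matrix.mul_sub]
  abel

end Matrix

theorem stmt10_general (n : ℕ) (hn : 1 ≤ n) (δ ε : ℝ) (hδ : 0 < δ)
    (Y P Pbar M N : Matrix (Fin n) (Fin n) ℝ)
    (hM : M = (1 + δ) • (Pᵀ * P))
    (hN : N = (1 + δ) • (Pᵀ * Pbar + Pbarᵀ * (P - Pbar)))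
    (h2 : ‖Y - N‖ ≤ ε / n) :
    Matrix.trace (Y - M) ≤ ε := by
  have hgap : 0 ≤ (M - N).trace := by
    rw [hM, hN, ← smul_sub, transpose_mul_self_sub_linearization,
      ← conjTranspose_eq_transpose_of_trivial]
    exact ((posSemidef_conjTranspose_mul_self _).smul (by linarith)).trace_nonneg
  have hn' : (n : ℝ) ≠ 0 := by positivity
  calc (Y - M).trace ≤ (Y - M).trace + (M - N).trace := le_add_of_nonneg_right hgap
    _ = (Y - N).trace := by rw [← trace_add, sub_add_sub_cancel]
    _ ≤ n * ‖Y - N‖ := by simpa using (Y - N).trace_le_card_mul_l2_opNorm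
    _ ≤ n * (ε / n) := by gcongr
    _ = ε := mul_div_cancel₀ ε hn'

/-- core of Proposition 2: With `M = (1+δ) PᵀP` and the affine
approximation `N = (1+δ)(Pᵀ P̄ + P̄ᵀ(P - P̄))`, if `Y - M` is positive semidefinite
and `‖Y - N‖ ≤ ε/n` (ℓ2 operator norm), then `trace(Y - M) ≤ ε`. -/
theorem stmt10 (n : ℕ) (hn : 1 ≤ n) (δ ε : ℝ) (hδ : 0 < δ) (hε : 0 ≤ ε)
    (Y P Pbar M N : Matrix (Fin n) (Fin n) ℝ) (hY : Yᵀ = Y)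
    (hM : M = (1 + δ) • (Pᵀ * P))
    (hN : N = (1 + δ) • (Pᵀ * Pbar + Pbarᵀ * (P - Pbar)))
    (h1 : (Y - M).PosSemidef)
    (h2 : ‖Y - N‖ ≤ ε / n) :
    Matrix.trace (Y - M) ≤ ε :=
  stmt10_general n hn δ ε hδ Y P Pbar M N hM hN h2
end

section
/- (Proposition 2, feasible-set inclusion F₆ ⊆ F₁ in SDP form.) Let n ≥ 1, δ > 0, ε ≥ 0, let Y be a symmetric n×n real matrix and P, P̄ arbitrary n×n real matrices. Define M = (1+δ)·PᵀP and N = (1+δ)·(PᵀP̄ + P̄ᵀ(P − P̄)). If the block matrix [[Y, Pᵀ],[P, (1+δ)⁻¹·I]] is positive semidefinite and the block matrix [[(ε/n)·I, Y − N],[Y − N, (ε/n)·I]] is positive semidefinite, then Y − M is positive semidefinite and trace(Y − M) ≤ ε. -/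
/-!
The first block matrix has Schur complement `Y - (1+δ) PᵀP = Y - M`, which is therefore positive
semidefinite. Compressing the second block matrix by `(I, -I)` gives `2(ε/n) I - 2(Y - N) ⪰ 0`,
so `trace (Y - N) ≤ ε`. Finally `M - N = (1+δ) (P - P̄)ᵀ(P - P̄) ⪰ 0`, hence
`trace (Y - M) ≤ trace (Y - N)`.
-/

open Matrix

namespace Matrix

variable {n : Type*} [Fintype n] [DecidableEq n]

open scoped ComplexOrder in
theorem PosSemidef.sub_smul_mul_conjTranspose_of_fromBlocks {𝕜 m : Type*} [RCLike 𝕜] [Fintype m]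
    {c : ℝ} (hc : 0 < c) {A : Matrix m m 𝕜} {B : Matrix m n 𝕜}
    (h : (fromBlocks A B Bᴴ (c⁻¹ • (1 : Matrix n n 𝕜))).PosSemidef) :
    (A - c • (B * Bᴴ)).PosSemidef := by
  have hD : (c⁻¹ • (1 : Matrix n n 𝕜)).PosDef := PosDef.one.smul (inv_pos.mpr hc)
  have : Invertible (c⁻¹ • (1 : Matrix n n 𝕜)) := hD.isUnit.invertible
  have hinv : (c⁻¹ • (1 : Matrix n n 𝕜))⁻¹ = c • 1 :=
    inv_eq_left_inv (by rw [smul_mul_smul, mul_inv_cancel₀ hc.ne', one_smul, one_mul])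
  simpa [hinv] using (PosDef.fromBlocks₂₂ A B hD).mp h

theorem PosSemidef.sub_sub_add_of_fromBlocks {R : Type*} [CommRing R] [PartialOrder R]
    [StarRing R] {A B C D : Matrix n n R} (h : (fromBlocks A B C D).PosSemidef) :
    (A - B - C + D).PosSemidef := by
  have := h.conjTranspose_mul_mul_same (fromRows (1 : Matrix n n R) (-1))
  rw [conjTranspose_fromRows_eq_fromCols_conjTranspose, fromCols_mul_fromBlocks,
    fromCols_mul_fromRows] at this
  convert this using 1
  simp only [conjTranspose_one, one_mul, conjTranspose_neg, neg_mul, mul_one, mul_neg]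
  abel

theorem PosSemidef.trace_add_le_of_fromBlocks {R : Type*} [CommRing R] [LinearOrder R]
    [IsOrderedRing R] [StarRing R] {A B C D : Matrix n n R}
    (h : (fromBlocks A B C D).PosSemidef) :
    trace B + trace C ≤ trace A + trace D := by
  have := h.sub_sub_add_of_fromBlocks.trace_nonneg
  rw [trace_add, trace_sub, trace_sub] at this
  exact sub_nonneg.mp (by convert this using 1; abel)

end Matrix

theorem stmt11_general (n : ℕ) (hn : 1 ≤ n) (δ ε : ℝ) (hδ : 0 < δ)
    (Y P Pbar M N : Matrix (Fin n) (Fin n) ℝ)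
    (hM : M = (1 + δ) • (Pᵀ * P))
    (hN : N = (1 + δ) • (Pᵀ * Pbar + Pbarᵀ * (P - Pbar)))
    (h1 : (Matrix.fromBlocks Y Pᵀ P
      ((1 + δ)⁻¹ • (1 : Matrix (Fin n) (Fin n) ℝ))).PosSemidef)
    (h2 : (Matrix.fromBlocks ((ε / n) • (1 : Matrix (Fin n) (Fin n) ℝ)) (Y - N)
      (Y - N) ((ε / n) • (1 : Matrix (Fin n) (Fin n) ℝ))).PosSemidef) :
    (Y - M).PosSemidef ∧ Matrix.trace (Y - M) ≤ ε := by
  have hc : 0 < 1 + δ := by positivity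
  refine ⟨?_, ?_⟩
  · simpa [hM] using
      PosSemidef.sub_smul_mul_conjTranspose_of_fromBlocks hc (B := Pᵀ) (by simpa using h1)
  have hYN : trace (Y - N) ≤ ε := by
    have hn0 : (n : ℝ) ≠ 0 := by positivity
    have := h2.trace_add_le_of_fromBlocks
    simp only [trace_smul, trace_one, Fintype.card_fin, smul_eq_mul,
      div_mul_cancel₀ _ hn0] at this
    linarith
  have hMN : M - N = (1 + δ) • ((P - Pbar)ᴴ * (P - Pbar)) := by
    rw [hM, hN, ← smul_sub, conjTranspose_eq_transpose_of_trivial, transpose_sub, sub_mul,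
      mul_sub, mul_sub]
    congr 1
    abel
  have hMN_nonneg : 0 ≤ trace (M - N) := by
    rw [hMN]
    exact ((posSemidef_conjTranspose_mul_self (P - Pbar)).smul hc.le).trace_nonneg
  calc trace (Y - M) = trace (Y - N) - trace (M - N) := by rw [← trace_sub]; congr 1; abel
    _ ≤ ε := by linarith

/-- Proposition 2, feasible-set inclusion F₆ ⊆ F₁ in SDP form:
with `M = (1+δ) PᵀP` and `N = (1+δ)(Pᵀ P̄ + P̄ᵀ(P - P̄))`, if the block matrices
`[[Y, Pᵀ], [P, (1+δ)⁻¹ I]]` and `[[(ε/n) I, Y - N], [Y - N, (ε/n) I]]` are positive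
semidefinite, then `Y - M` is positive semidefinite and `trace(Y - M) ≤ ε`. -/
theorem stmt11 (n : ℕ) (hn : 1 ≤ n) (δ ε : ℝ) (hδ : 0 < δ) (hε : 0 ≤ ε)
    (Y P Pbar M N : Matrix (Fin n) (Fin n) ℝ) (hY : Yᵀ = Y)
    (hM : M = (1 + δ) • (Pᵀ * P))
    (hN : N = (1 + δ) • (Pᵀ * Pbar + Pbarᵀ * (P - Pbar)))
    (h1 : (Matrix.fromBlocks Y Pᵀ P
      ((1 + δ)⁻¹ • (1 : Matrix (Fin n) (Fin n) ℝ))).PosSemidef)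
    (h2 : (Matrix.fromBlocks ((ε / n) • (1 : Matrix (Fin n) (Fin n) ℝ)) (Y - N)
      (Y - N) ((ε / n) • (1 : Matrix (Fin n) (Fin n) ℝ))).PosSemidef) :
    (Y - M).PosSemidef ∧ Matrix.trace (Y - M) ≤ ε :=
  stmt11_general n hn δ ε hδ Y P Pbar M N hM hN h1 h2
end

section
/- (Proposition 1, feasible-set inclusion F₂ ⊆ F₁.) Let δ > 0, let Y be a symmetric n×n real matrix and P an n×n real matrix. If the block matrix [[Y, Pᵀ],[P, (1+δ)⁻¹·I]] is positive semidefinite and (1+δ)·PᵀP − Y is positive semidefinite, then Y = (1+δ)·PᵀP; consequently, for every ε ≥ 0 one has ‖Y − (1+δ)·PᵀP‖ ≤ ε for any norm ‖·‖ on n×n matrices. -/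
/-!
Since `(1+δ)⁻¹ I` is positive definite with inverse `(1+δ) I`, the block constraint is equivalent to
its Schur complement `Y - (1+δ) PᵀP ⪰ 0`. Together with `(1+δ) PᵀP - Y ⪰ 0` this gives
`Y = (1+δ) PᵀP` by antisymmetry of the Loewner order, so `Y - (1+δ) PᵀP` has seminorm `0`.
-/

open Matrix

open scoped ComplexOrder MatrixOrder

namespace Matrix

variable {m n 𝕜 : Type*} [Fintype m] [Fintype n] [DecidableEq n] [RCLike 𝕜]

theorem posSemidef_fromBlocks_inv_smul_one_iff (A : Matrix m m 𝕜) (B : Matrix m n 𝕜)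
    {c : 𝕜} (hc : 0 < c) :
    (fromBlocks A B Bᴴ (c⁻¹ • 1)).PosSemidef ↔ (A - c • (B * Bᴴ)).PosSemidef := by
  have hD : (c⁻¹ • 1 : Matrix n n 𝕜).PosDef := PosDef.one.smul (inv_pos.mpr hc)
  have hcD : (c⁻¹ • 1 : Matrix n n 𝕜) * (c • 1) = 1 := by
    rw [smul_mul_smul_comm, one_mul, inv_mul_cancel₀ hc.ne', one_smul]
  let : Invertible (c⁻¹ • 1 : Matrix n n 𝕜) := invertibleOfRightInverse _ _ hcD
  rw [PosDef.fromBlocks₂₂ A B hD, inv_eq_right_inv hcD, Matrix.mul_smul, Matrix.mul_one,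
    Matrix.smul_mul]

end Matrix

theorem stmt12_general (n : ℕ) (δ : ℝ) (hδ : 0 < δ)
    (Y P : Matrix (Fin n) (Fin n) ℝ)
    (h1 : (Matrix.fromBlocks Y Pᵀ P
      ((1 + δ)⁻¹ • (1 : Matrix (Fin n) (Fin n) ℝ))).PosSemidef)
    (h2 : ((1 + δ) • (Pᵀ * P) - Y).PosSemidef) :
    Y = (1 + δ) • (Pᵀ * P) ∧
      ∀ (nrm : Seminorm ℝ (Matrix (Fin n) (Fin n) ℝ)) (ε : ℝ), 0 ≤ ε →
        nrm (Y - (1 + δ) • (Pᵀ * P)) ≤ ε := by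
  have hP : (Pᵀ)ᴴ = P := by rw [conjTranspose_eq_transpose_of_trivial, transpose_transpose]
  have hSchur : (Y - (1 + δ) • (Pᵀ * P)).PosSemidef := by
    have := (posSemidef_fromBlocks_inv_smul_one_iff Y Pᵀ (by positivity : (0 : ℝ) < 1 + δ)).mp
      (by rwa [hP])
    rwa [hP] at this
  have hY : Y = (1 + δ) • (Pᵀ * P) := le_antisymm h2 hSchur
  refine ⟨hY, fun nrm ε hε => ?_⟩
  rwa [hY, sub_self, map_zero]

/-- Proposition 1, feasible-set inclusion F₂ ⊆ F₁: if the block matrix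
`[[Y, Pᵀ], [P, (1+δ)⁻¹ I]]` is positive semidefinite and `(1+δ) PᵀP - Y` is positive
semidefinite, then `Y = (1+δ) PᵀP`; consequently, for any (semi)norm on `n×n`
matrices and every `ε ≥ 0`, `‖Y - (1+δ) PᵀP‖ ≤ ε`. -/
theorem stmt12 (n : ℕ) (δ : ℝ) (hδ : 0 < δ)
    (Y P : Matrix (Fin n) (Fin n) ℝ) (hY : Yᵀ = Y)
    (h1 : (Matrix.fromBlocks Y Pᵀ P
      ((1 + δ)⁻¹ • (1 : Matrix (Fin n) (Fin n) ℝ))).PosSemidef)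
    (h2 : ((1 + δ) • (Pᵀ * P) - Y).PosSemidef) :
    Y = (1 + δ) • (Pᵀ * P) ∧
      ∀ (nrm : Seminorm ℝ (Matrix (Fin n) (Fin n) ℝ)) (ε : ℝ), 0 ≤ ε →
        nrm (Y - (1 + δ) • (Pᵀ * P)) ≤ ε :=
  stmt12_general n δ hδ Y P h1 h2
end
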